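/- Let B be a nondegenerate alternating bilinear form on a finite-dimensional complex vector space V, and let P be nilpotent, self-adjoint with respect to B, with dim ker P^k = 2·Σ_{j=1}^N min(k, n_j) for every k ≥ 0, where n_1 ≥ n_2 ≥ … ≥ n_N ≥ 1 (so (V, B, P) is the direct sum of Jordan blocks J_{0,2n_1}, …, J_{0,2n_N}). Let g be the Lie algebra of the automorphism group, g = {C : V → V linear | C ∘ P = P ∘ C and B(C u, v) + B(u, C v) = 0 for all u, v}. Then dim g = Σ_{j=1}^N (4j − 1)·n_j. -/

import Mathlib

/-!
Because `B` is alternating and nondegenerate, `C ↦ B (C ·) ·` identifies `autAlg B P` with the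
space of symmetric bilinear forms `Φ` satisfying `Φ (P u) v = Φ u (P v)`. Such a `Φ` induces the
form `Φ' (P x) (P y) := Φ x (P y)` of the same kind for `P` restricted to `range P`; the map
`Φ ↦ Φ'` is onto, and its kernel is the space of symmetric forms on `V ⧸ range P ≅ ker P`. By
induction the dimension is `∑ₖ C(dₖ₊₁ - dₖ + 1, 2)` with `dₖ = dim ker Pᵏ`. For the given Jordan
type `dₖ₊₁ - dₖ = 2 tₖ` with `tₖ = #{j | k < n j}`, and since `n` is antitone these `j` are exactly
the `j < tₖ`, so `C(2 tₖ + 1, 2) = ∑_{j < tₖ} (4 j + 3)`; summing over `k` first gives the formula.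
-/

open Module

/-- The Lie algebra of the automorphism group of `(V, B, P)`: linear endomorphisms
commuting with `P` and infinitesimally preserving `B`. -/
def autAlg {V : Type*} [AddCommGroup V] [Module ℂ V]
    (B : V →ₗ[ℂ] V →ₗ[ℂ] ℂ) (P : V →ₗ[ℂ] V) : Submodule ℂ (V →ₗ[ℂ] V) where
  carrier := {C | (∀ v, C (P v) = P (C v)) ∧ ∀ u v, B (C u) v + B u (C v) = 0}
  add_mem' := by
    rintro C D ⟨hC1, hC2⟩ ⟨hD1, hD2⟩
    refine ⟨fun v => ?_, fun u v => ?_⟩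
    · simp [hC1 v, hD1 v]
    · have h1 := hC2 u v
      have h2 := hD2 u v
      simp only [LinearMap.add_apply, map_add]
      linear_combination h1 + h2
  zero_mem' := by
    refine ⟨fun v => ?_, fun u v => ?_⟩ <;> simp
  smul_mem' := by
    rintro c C ⟨hC1, hC2⟩
    refine ⟨fun v => ?_, fun u v => ?_⟩
    · simp [hC1 v]
    · have h := hC2 u v
      simp only [LinearMap.smul_apply, map_smul, smul_eq_mul]
      linear_combination c * h

open Module LinearMap Submodule Finset

section Forms

variable {K V W : Type*} [Field K] [AddCommGroup V] [Module K V] [AddCommGroup W] [Module K W]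

variable (K V) in
def symmForms : Submodule K (LinearMap.BilinForm K V) where
  carrier := {Φ | ∀ u v, Φ u v = Φ v u}
  add_mem' hΦ hΨ u v := by simp [hΦ u v, hΨ u v]
  zero_mem' _ _ := rfl
  smul_mem' c Φ hΦ u v := by simp [hΦ u v]

def symmInvariantForms (P : Module.End K V) : Submodule K (LinearMap.BilinForm K V) where
  carrier := {Φ | (∀ u v, Φ u v = Φ v u) ∧ ∀ u v, Φ (P u) v = Φ u (P v)}
  add_mem' := fun ⟨hs, hi⟩ ⟨hs', hi'⟩ =>
    ⟨fun u v => by simp [hs u v, hs' u v], fun u v => by simp [hi u v, hi' u v]⟩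
  zero_mem' := ⟨fun _ _ => rfl, fun _ _ => rfl⟩
  smul_mem' c Φ := fun ⟨hs, hi⟩ => ⟨fun u v => by simp [hs u v], fun u v => by simp [hi u v]⟩

def LinearMap.BilinForm.compₗ (l r : W →ₗ[K] V) :
    LinearMap.BilinForm K V →ₗ[K] LinearMap.BilinForm K W where
  toFun Φ := Φ.comp l r
  map_add' _ _ := rfl
  map_smul' _ _ := rfl

@[simp]
lemma LinearMap.BilinForm.compₗ_apply (l r : W →ₗ[K] V) (Φ : LinearMap.BilinForm K V)
    (x y : W) : BilinForm.compₗ l r Φ x y = Φ (l x) (r y) := rfl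

theorem finrank_symmForms [FiniteDimensional K V] :
    finrank K (symmForms K V) = (finrank K V + 1).choose 2 := by
  classical
  set b := finBasis K V
  let ev : symmForms K V →ₗ[K] Sym2 (Fin (finrank K V)) → K :=
    { toFun Φ := Sym2.lift ⟨fun i j => Φ.1 (b i) (b j), fun i j => Φ.2 _ _⟩
      map_add' Φ Ψ := by ext s; induction s using Sym2.ind; simp
      map_smul' c Φ := by ext s; induction s using Sym2.ind; simp }
  have hinj : Function.Injective ev := fun Φ Ψ h => Subtype.ext <|
    BilinForm.ext_basis b fun i j => by simpa [ev] using congrFun h s(i, j)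
  have hsurj : Function.Surjective ev := by
    intro f
    set Φ := Matrix.toBilin b (Matrix.of fun i j => f s(i, j))
    have hΦ : ∀ i j, Φ (b i) (b j) = f s(i, j) := by
      simp [Φ, Matrix.toBilin_apply, Finsupp.single_apply]
    have hsymm : Φ.flip = Φ := BilinForm.ext_basis b fun i j => by
      show Φ (b j) (b i) = Φ (b i) (b j)
      rw [hΦ, hΦ, Sym2.eq_swap]
    refine ⟨⟨Φ, fun u v => DFunLike.congr_fun (DFunLike.congr_fun hsymm v) u⟩, ?_⟩
    ext s
    induction s using Sym2.ind
    simp [ev, hΦ]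
  rw [(LinearEquiv.ofBijective ev ⟨hinj, hsurj⟩).finrank_eq, finrank_fintype_fun_eq_card,
    Sym2.card, Fintype.card_fin]

end Forms

section RangeRestriction

variable {K V W : Type*} [Field K] [AddCommGroup V] [Module K V] [AddCommGroup W] [Module K W]

theorem Submodule.finrank_map_add_finrank_inf_ker [FiniteDimensional K V] (f : V →ₗ[K] W)
    (S : Submodule K V) : finrank K (S.map f) + finrank K ↥(S ⊓ ker f) = finrank K S := by
  rw [← range_domRestrict, ← map_comap_subtype, finrank_map_subtype_eq, ← ker_domRestrict]
  exact finrank_range_add_finrank_ker _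

def restrictRange (P : Module.End K V) : Module.End K (range P) :=
  P.restrict fun x _ => mem_range_self P x

lemma restrictRange_apply (P : Module.End K V) (a : range P) :
    (restrictRange P a : V) = P a := rfl

lemma ker_restrictRange_pow (P : Module.End K V) (k : ℕ) :
    ker (restrictRange P ^ k) = (ker (P ^ k)).comap (range P).subtype := by
  rw [restrictRange, Module.End.pow_restrict, ker_restrict]

lemma restrictRange_pow_eq_zero {P : Module.End K V} {m : ℕ} (hP : P ^ (m + 1) = 0) :
    restrictRange P ^ m = 0 := by
  rw [← ker_eq_top, ker_restrictRange_pow, eq_top_iff]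
  rintro ⟨_, x, rfl⟩ -
  simp [← Module.End.mul_apply, ← pow_succ, hP]

theorem finrank_ker_restrictRange_pow_add [FiniteDimensional K V] (P : Module.End K V) (k : ℕ) :
    finrank K (ker (restrictRange P ^ k)) + finrank K (ker P) =
      finrank K (ker (P ^ (k + 1))) := by
  have hcomap : ker (P ^ (k + 1)) = (ker (P ^ k)).comap P := by
    rw [pow_succ, Module.End.mul_eq_comp, ker_comp]
  have hinf : ker (P ^ (k + 1)) ⊓ ker P = ker P := by
    rw [inf_eq_right, hcomap]
    exact ker_le_comap _
  rw [ker_restrictRange_pow, ← finrank_map_subtype_eq, map_comap_subtype, ← hinf,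
    ← map_comap_eq, ← hcomap]
  exact finrank_map_add_finrank_inf_ker P _

end RangeRestriction

section RestrictForms

variable {K V : Type*} [Field K] [AddCommGroup V] [Module K V]
  {P : Module.End K V} {σ : range P →ₗ[K] V}

theorem map_compₗ_symmInvariantForms (hσ : ∀ b, P (σ b) = b) :
    (symmInvariantForms P).map (BilinForm.compₗ (range P).subtype σ) =
      symmInvariantForms (restrictRange P) := by
  apply le_antisymm
  · rintro _ ⟨Φ, ⟨hs, hi⟩, rfl⟩
    have hσΦ : ∀ a b : range P, Φ a (σ b) = Φ (σ a) b := fun a b => by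
      rw [← hσ a, hi, hσ]
    refine ⟨fun a b => ?_, fun a b => ?_⟩
    · simp only [BilinForm.compₗ_apply, subtype_apply, hσΦ a, hs (σ a)]
    · simp only [BilinForm.compₗ_apply, subtype_apply, restrictRange_apply]
      rw [hi, hσ, hσΦ, restrictRange_apply, ← hi, hσ]
  · rintro Ψ ⟨hs, hi⟩
    obtain ⟨q, hq⟩ := (range P).subtype.exists_leftInverse_of_injective (range P).ker_subtype
    have hq : ∀ a : range P, q a = a := DFunLike.congr_fun hq
    set ρ := P.rangeRestrict
    set P' := restrictRange P
    have hqP : ∀ u, q (P u) = ρ u := fun u => hq (ρ u)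
    have hρP : ∀ u, ρ (P u) = P' (ρ u) := fun u => rfl
    have hρa : ∀ a : range P, ρ a = P' a := fun a => rfl
    have hρσ : ∀ b, ρ (σ b) = b := fun b => Subtype.ext (hσ b)
    -- an extension of `Ψ`: on `range P × range P` the last two terms cancel
    refine ⟨BilinForm.compₗ q ρ Ψ + BilinForm.compₗ ρ q Ψ - BilinForm.compₗ (P' ∘ₗ q) q Ψ,
      ⟨fun u v => ?_, fun u v => ?_⟩, ?_⟩
    · simp only [LinearMap.add_apply, LinearMap.sub_apply, BilinForm.compₗ_apply, comp_apply]
      rw [hs (q u), hs (ρ u), hs (P' (q v)), hi]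
      ring
    · simp only [LinearMap.add_apply, LinearMap.sub_apply, BilinForm.compₗ_apply, comp_apply]
      rw [hqP, hqP, hρP, hρP, hi (q u), hi]
      ring
    · ext a b
      simp only [LinearMap.add_apply, LinearMap.sub_apply, BilinForm.compₗ_apply, comp_apply,
        subtype_apply, hq, hρσ, hρa]
      ring

theorem symmInvariantForms_inf_ker_compₗ (hσ : ∀ b, P (σ b) = b) :
    symmInvariantForms P ⊓ ker (BilinForm.compₗ (range P).subtype σ) =
      (symmForms K (V ⧸ range P)).map (BilinForm.compₗ (range P).mkQ (range P).mkQ) := by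
  apply le_antisymm
  · rintro Φ ⟨⟨hs, hi⟩, hker⟩
    have hP : ∀ x y, Φ x (P y) = 0 := fun x y =>
      calc Φ x (P y) = Φ (P x) (σ (P.rangeRestrict y)) := by rw [hi, hσ]; rfl
        _ = BilinForm.compₗ (range P).subtype σ Φ (P.rangeRestrict x) (P.rangeRestrict y) := rfl
        _ = 0 := by rw [mem_ker.1 hker]; rfl
    have hl : range P ≤ ker Φ := by
      rintro _ ⟨y, rfl⟩
      ext x
      exact (hs _ _).trans (hP x y)
    have hr : range P ≤ ker Φ.flip := by
      rintro _ ⟨y, rfl⟩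
      ext x
      exact hP x y
    refine ⟨Φ.liftQ₂ _ _ hl hr, fun x y => ?_, rfl⟩
    induction x using Submodule.Quotient.induction_on
    induction y using Submodule.Quotient.induction_on
    exact hs _ _
  · rintro _ ⟨Ψ, hΨ, rfl⟩
    have hmk : ∀ x ∈ range P, (range P).mkQ x = 0 := fun x hx => (Quotient.mk_eq_zero _).2 hx
    refine ⟨⟨fun u v => hΨ _ _, fun u v => ?_⟩, mem_ker.2 ?_⟩
    · simp [hmk _ (mem_range_self P u), hmk _ (mem_range_self P v)]
    · ext a b
      simp [hmk a a.2]

end RestrictForms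

section Recursion

variable {K V : Type*} [Field K] [AddCommGroup V] [Module K V] [FiniteDimensional K V]

theorem finrank_symmInvariantForms_eq (P : Module.End K V) :
    finrank K (symmInvariantForms P) =
      (finrank K (ker P) + 1).choose 2 + finrank K (symmInvariantForms (restrictRange P)) := by
  obtain ⟨σ, hρσ⟩ := P.rangeRestrict.exists_rightInverse_of_surjective P.range_rangeRestrict
  have hσ : ∀ b, P (σ b) = b := fun b => congrArg Subtype.val (DFunLike.congr_fun hρσ b)
  have hquot : finrank K (V ⧸ range P) = finrank K (ker P) := by
    have := (range P).finrank_quotient_add_finrank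
    have := P.finrank_range_add_finrank_ker
    omega
  have hinj : Function.Injective (BilinForm.compₗ (range P).mkQ (range P).mkQ) := fun Φ Ψ h =>
    (BilinForm.comp_inj Φ Ψ (range P).mkQ_surjective (range P).mkQ_surjective).1 h
  have key := finrank_map_add_finrank_inf_ker (V := LinearMap.BilinForm K V)
    (W := LinearMap.BilinForm K (range P)) (BilinForm.compₗ (range P).subtype σ)
    (symmInvariantForms P)
  rw [map_compₗ_symmInvariantForms hσ, symmInvariantForms_inf_ker_compₗ hσ,
    ← (equivMapOfInjective _ hinj _).finrank_eq, finrank_symmForms, hquot] at key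
  omega

theorem finrank_symmInvariantForms_of_pow_eq_zero {P : Module.End K V} {m : ℕ} (hP : P ^ m = 0) :
    finrank K (symmInvariantForms P) = ∑ k ∈ Finset.range m,
      (finrank K (ker (P ^ (k + 1))) - finrank K (ker (P ^ k)) + 1).choose 2 := by
  induction m generalizing V with
  | zero =>
    have hV : ∀ v : V, v = 0 := fun v => by simpa using DFunLike.congr_fun hP v
    have : symmInvariantForms P = ⊥ := eq_bot_iff.2 fun Φ _ => by
      ext u v
      simp [hV u]
    rw [this, finrank_bot, Finset.sum_range_zero]
  | succ m ih =>
    rw [finrank_symmInvariantForms_eq, ih (restrictRange_pow_eq_zero hP), Finset.sum_range_succ',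
      add_comm]
    congr 1
    · refine Finset.sum_congr rfl fun k _ => ?_
      have h₁ := finrank_ker_restrictRange_pow_add P k
      have h₂ := finrank_ker_restrictRange_pow_add P (k + 1)
      congr 2
      omega
    · rw [zero_add, pow_one, pow_zero, Module.End.one_eq_id, ker_id, finrank_bot, Nat.sub_zero]

end Recursion

section AutAlg

variable {V : Type*} [AddCommGroup V] [Module ℂ V] {B : LinearMap.BilinForm ℂ V}
  {P : Module.End ℂ V}

lemma mem_autAlg_iff_comp_mem_symmInvariantForms (hB : LinearMap.IsAlt B)
    (hBl : B.SeparatingLeft) (hPsa : ∀ u v, B (P u) v = B u (P v)) {C : Module.End ℂ V} :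
    C ∈ autAlg B P ↔ B ∘ₗ C ∈ symmInvariantForms P := by
  constructor
  · rintro ⟨hcomm, hskew⟩
    refine ⟨fun u v => ?_, fun u v => ?_⟩
    · rw [comp_apply, comp_apply, eq_neg_of_add_eq_zero_left (hskew u v), hB.neg]
    · rw [comp_apply, comp_apply, hcomm, hPsa]
  · rintro ⟨hs, hi⟩
    refine ⟨fun v => sub_eq_zero.1 (hBl _ fun w => ?_), fun u v => ?_⟩
    · rw [map_sub, LinearMap.sub_apply, hPsa, sub_eq_zero]
      exact hi v w
    · rw [← hB.neg (C v) u, add_neg_eq_zero]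
      exact hs u v

theorem finrank_autAlg [FiniteDimensional ℂ V] (hB : LinearMap.IsAlt B) (hBl : B.SeparatingLeft)
    (hPsa : ∀ u v, B (P u) v = B u (P v)) :
    finrank ℂ (autAlg B P) = finrank ℂ (symmInvariantForms P) := by
  set e := B.toDual (hB.isRefl.nondegenerate_iff_separatingLeft.2 hBl)
  have : autAlg B P = (symmInvariantForms P).comap (LinearEquiv.congrRight e).toLinearMap := by
    ext C
    exact mem_autAlg_iff_comp_mem_symmInvariantForms hB hBl hPsa
  rw [this, comap_equiv_eq_map_symm, LinearEquiv.finrank_map_eq]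

end AutAlg

section Partitions

variable {N : ℕ} {n : Fin N → ℕ}

lemma sum_min_succ (k : ℕ) :
    ∑ j, min (k + 1) (n j) = ∑ j, min k (n j) + #{j | k < n j} := by
  rw [card_filter, ← sum_add_distrib]
  exact sum_congr rfl fun j _ => by split_ifs <;> omega

lemma Antitone.lt_iff_lt_card_filter (hn : Antitone n) (k : ℕ) (j : Fin N) :
    k < n j ↔ (j : ℕ) < #{i | k < n i} := by
  constructor
  · intro h
    calc (j : ℕ) < #(Iic j) := by rw [Fin.card_Iic]; omega
      _ ≤ #{i | k < n i} := card_le_card fun i hi => by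
        simpa using h.trans_le (hn (mem_Iic.1 hi))
  · intro h
    by_contra! hle
    have : #{i | k < n i} ≤ #(Iio j) := card_le_card fun i hi => by
      simp only [mem_filter, mem_univ, true_and] at hi
      exact mem_Iio.2 (lt_of_not_ge fun hji => (hi.trans_le (hn hji)).not_ge hle)
    rw [Fin.card_Iio] at this
    omega

lemma Finset.range_filter_lt_of_le {t N : ℕ} (h : t ≤ N) : {i ∈ range N | i < t} = range t := by
  ext
  simp only [mem_filter, mem_range]
  omega

lemma Fin.sum_filter_val_lt (f : ℕ → ℕ) {t : ℕ} (h : t ≤ N) :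
    ∑ j : Fin N with j.val < t, f j = ∑ i ∈ range t, f i := by
  rw [sum_filter, Fin.sum_univ_eq_sum_range (fun i => if i < t then f i else 0), ← sum_filter,
    Finset.range_filter_lt_of_le h]

lemma sum_range_four_mul_add_three (t : ℕ) :
    ∑ i ∈ range t, (4 * i + 3) = (2 * t + 1).choose 2 := by
  induction t with
  | zero => rfl
  | succ t ih =>
    rw [sum_range_succ, ih, show 2 * (t + 1) + 1 = 2 * t + 1 + 1 + 1 by ring,
      Nat.choose_succ_succ' (2 * t + 1 + 1) 1, Nat.choose_succ_succ' (2 * t + 1) 1,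
      Nat.choose_one_right, Nat.choose_one_right, one_add_one_eq_two]
    omega

theorem Antitone.sum_choose_card_filter_lt (hn : Antitone n) {m : ℕ} (hm : ∀ j, n j ≤ m) :
    ∑ k ∈ range m, (2 * #{j | k < n j} + 1).choose 2 = ∑ j : Fin N, (4 * (j : ℕ) + 3) * n j :=
  calc ∑ k ∈ range m, (2 * #{j | k < n j} + 1).choose 2
      = ∑ k ∈ range m, ∑ j : Fin N with k < n j, (4 * (j : ℕ) + 3) :=
        sum_congr rfl fun k _ => by
          have hS : univ.filter (fun j => k < n j) =
              univ.filter fun j : Fin N => j.val < #{i | k < n i} :=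
            filter_congr fun j _ => hn.lt_iff_lt_card_filter k j
          have hcard : #{i | k < n i} ≤ N := (card_le_univ _).trans_eq (Fintype.card_fin N)
          conv_rhs => rw [hS, Fin.sum_filter_val_lt (fun i => 4 * i + 3) hcard,
            sum_range_four_mul_add_three]
    _ = ∑ j : Fin N, ∑ k ∈ range m with k < n j, (4 * (j : ℕ) + 3) := sum_comm' fun k j => by simp
    _ = ∑ j : Fin N, (4 * (j : ℕ) + 3) * n j := sum_congr rfl fun j _ => by
        rw [sum_const, Finset.range_filter_lt_of_le (hm j), card_range, smul_eq_mul, mul_comm]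

end Partitions

theorem dim_autAlg_jordan_general
    {V : Type*} [AddCommGroup V] [Module ℂ V] [FiniteDimensional ℂ V]
    (B : V →ₗ[ℂ] V →ₗ[ℂ] ℂ)
    (hBalt : ∀ v, B v v = 0)
    (hBnd : ∀ v, (∀ u, B v u = 0) → v = 0)
    (P : V →ₗ[ℂ] V)
    (hPsa : ∀ u v, B (P u) v = B u (P v))
    (hPnil : IsNilpotent P)
    (N : ℕ) (n : Fin N → ℕ)
    (hmono : ∀ i j : Fin N, i ≤ j → n j ≤ n i)
    (hJ : ∀ k : ℕ, finrank ℂ (LinearMap.ker (P ^ k)) = 2 * ∑ j : Fin N, min k (n j)) :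
    finrank ℂ (autAlg B P) = ∑ j : Fin N, (4 * ((j : ℕ) + 1) - 1) * n j := by
  obtain ⟨m₀, hm₀⟩ := hPnil
  have hPm : P ^ (m₀ + ∑ j, n j) = 0 := pow_eq_zero_of_le (Nat.le_add_right _ _) hm₀
  have hjump : ∀ k, finrank ℂ (ker (P ^ (k + 1))) - finrank ℂ (ker (P ^ k)) =
      2 * #{j | k < n j} := fun k => by
    rw [hJ, hJ, sum_min_succ]
    omega
  rw [finrank_autAlg hBalt hBnd hPsa, finrank_symmInvariantForms_of_pow_eq_zero hPm]
  simp_rw [hjump]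
  rw [Antitone.sum_choose_card_filter_lt (fun i j => hmono i j) fun j =>
    (single_le_sum (fun _ _ => Nat.zero_le _) (mem_univ j)).trans (Nat.le_add_left _ _)]
  exact sum_congr rfl fun j _ => by rw [show 4 * ((j : ℕ) + 1) - 1 = 4 * j + 3 by omega]

/-- **Dimension of the automorphism Lie algebra (P. Zhang).**
If `(V, B, P)` is the direct sum of Jordan blocks `J_{0,2n_1}, …, J_{0,2n_N}` with
`n_1 ≥ … ≥ n_N ≥ 1`, then the Lie algebra `g` of the automorphism group satisfies
`dim g = Σ_{j=1}^N (4j − 1) n_j`. -/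
theorem dim_autAlg_jordan
    {V : Type*} [AddCommGroup V] [Module ℂ V] [FiniteDimensional ℂ V]
    (B : V →ₗ[ℂ] V →ₗ[ℂ] ℂ)
    (hBalt : ∀ v, B v v = 0)
    (hBnd : ∀ v, (∀ u, B v u = 0) → v = 0)
    (P : V →ₗ[ℂ] V)
    (hPsa : ∀ u v, B (P u) v = B u (P v))
    (hPnil : IsNilpotent P)
    (N : ℕ) (n : Fin N → ℕ)
    (hmono : ∀ i j : Fin N, i ≤ j → n j ≤ n i)
    (hpos : ∀ j, 1 ≤ n j)
    (hJ : ∀ k : ℕ, finrank ℂ (LinearMap.ker (P ^ k)) = 2 * ∑ j : Fin N, min k (n j)) :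
    finrank ℂ (autAlg B P) = ∑ j : Fin N, (4 * ((j : ℕ) + 1) - 1) * n j :=
  dim_autAlg_jordan_general B hBalt hBnd P hPsa hPnil N n hmono hJ
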